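/- Let s, t > 1 be odd integers with gcd(s, t) = 1. Then the number of ordered pairs ((k, ℓ), (k', ℓ')) of elements of ZMod s × ZMod t with (k, ℓ) ≠ (k', ℓ') such that the graph D_{k,ℓ} ⊔ D_{k',ℓ'} contains a Hamiltonian path equals (s * φ(s)) * (t * φ(t)). (Hence the family {D_{k,ℓ}} contains 2 · (s·φ(s)/2) · (t·φ(t)/2) perfect unordered pairs, giving c(K_{st}) ≥ 2·c(K_s)·c(K_t) for this construction.) -/

import Mathlib

/-- For `s, t ≥ 1`, `k : ZMod s`, `ℓ : ZMod t`, the graph `D k ℓ` on vertex set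
`ZMod s × ZMod t` in which distinct vertices `(i, j)` and `(i', j')` are
adjacent iff `i + i' = k` and `j + j' = ℓ`. -/
def D (s t : ℕ) (k : ZMod s) (ℓ : ZMod t) : SimpleGraph (ZMod s × ZMod t) where
  Adj x y := x ≠ y ∧ x.1 + y.1 = k ∧ x.2 + y.2 = ℓ
  symm := ⟨fun x y ⟨h1, h2, h3⟩ =>
    ⟨h1.symm, by rwa [add_comm], by rwa [add_comm]⟩⟩
  loopless := ⟨fun x ⟨h, _⟩ => h rfl⟩

/-- A graph has a Hamiltonian path if some walk in it is a Hamiltonian path. -/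
def HasHamiltonianPath {V : Type*} [DecidableEq V] (G : SimpleGraph V) : Prop :=
  ∃ (a b : V) (p : G.Walk a b), p.IsHamiltonian

/-!
Write `c = (k, ℓ)` and view `D s t k ℓ` as the graph on the abelian group `G = ZMod s × ZMod t`
joining distinct `x, y` with `x + y = c`. When `G` has odd order, `D_c ⊔ D_c'` has a Hamiltonian
path iff `δ = c' - c` generates `G`. If it does, pick `f` with `2f = c`: the vertices
`f, f + δ, f - δ, f + 2δ, f - 2δ, …` exhaust `G`, and consecutive sums alternate between `c'`
and `c`. Conversely, modulo `⟨δ⟩` every vertex on a walk from `a` lies in the class of `a` or of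
`c - a`, so `G ⧸ ⟨δ⟩` has at most two elements, hence one since its order is odd.
By the Chinese remainder theorem `G` is a quotient of `ℤ` as a ring, so `δ` generates `G` iff it
is a unit, and the admissible pairs are the `(c, c + u)` with `u` a unit.
-/

open SimpleGraph AddSubgroup

theorem hasHamiltonianPath_of_injOn {V : Type*} [Finite V] [Nonempty V] [DecidableEq V]
    {G : SimpleGraph V} (v : ℕ → V) (hinj : Set.InjOn v (Finset.range (Nat.card V)))
    (hadj : ∀ m, m + 1 < Nat.card V → G.Adj (v m) (v (m + 1))) : HasHamiltonianPath G := by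
  set n := Nat.card V
  set L := (List.range n).map v
  have hn : 0 < n := Nat.card_pos
  have hne : L ≠ [] := by simpa [L] using hn.ne'
  have hchain : L.IsChain G.Adj := by
    rw [List.isChain_map, ← Nat.sub_add_cancel hn, List.isChain_range_succ]
    exact fun m hm => hadj m (by omega)
  have hnodup : L.Nodup :=
    List.nodup_range.map_on fun x hx y hy => hinj (by simpa using hx) (by simpa using hy)
  have himage : v '' (Finset.range n) = Set.univ :=
    Set.eq_of_subset_of_ncard_le (Set.subset_univ _)
      (by rw [hinj.ncard_image, Set.ncard_coe_finset, Finset.card_range, Set.ncard_univ])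
  have hmem : ∀ w, w ∈ L := fun w => by
    obtain ⟨m, hm, rfl⟩ := himage.symm ▸ Set.mem_univ w
    exact List.mem_map_of_mem (List.mem_range.2 (by simpa using hm))
  let p := Walk.ofSupport L hne hchain
  have hp : p.IsPath := (Walk.isPath_def p).2 (by simpa [p] using hnodup)
  exact ⟨_, _, p, hp.isHamiltonian_of_mem (by simpa [p] using hmem)⟩

def sumGraph {G : Type*} [AddCommMagma G] (c : G) : SimpleGraph G where
  Adj x y := x ≠ y ∧ x + y = c
  symm := ⟨fun x y ⟨hne, hsum⟩ => ⟨hne.symm, by rwa [add_comm]⟩⟩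
  loopless := ⟨fun x ⟨hne, _⟩ => hne rfl⟩

theorem D_eq_sumGraph (s t : ℕ) (k : ZMod s) (ℓ : ZMod t) : D s t k ℓ = sumGraph (k, ℓ) := by
  ext x y
  simp [D, sumGraph, Prod.ext_iff]

/-- The sequence `0, 1, -1, 2, -2, …`. -/
def zigzag (m : ℕ) : ℤ := if m % 2 = 0 then -((m / 2 : ℕ) : ℤ) else ((m / 2 + 1 : ℕ) : ℤ)

theorem zigzag_add_zigzag_succ (m : ℕ) :
    zigzag m + zigzag (m + 1) = if m % 2 = 0 then 1 else 0 := by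
  simp only [zigzag]; split_ifs <;> omega

theorem eq_of_zigzag_modEq {n m m' : ℕ} (hn : Odd n) (hm : m < n) (hm' : m' < n)
    (h : zigzag m ≡ zigzag m' [ZMOD n]) : m = m' := by
  have hbound : ∀ m < n, -(n : ℤ) < 2 * zigzag m ∧ 2 * zigzag m < n := by
    obtain ⟨k, rfl⟩ := hn
    intro m hm
    simp only [zigzag]; split_ifs <;> omega
  have hzero := Int.eq_zero_of_abs_lt_dvd h.dvd <| abs_lt.2
    ⟨by linarith [hbound m hm, hbound m' hm'], by linarith [hbound m hm, hbound m' hm']⟩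
  simp only [zigzag] at hzero
  split_ifs at hzero <;> omega

section SumGraph

variable {G : Type*} [AddCommGroup G]

theorem exists_add_self_eq_of_odd_card (hG : Odd (Nat.card G)) (c : G) : ∃ f : G, f + f = c :=
  ⟨(nsmulCoprime (Nat.coprime_two_right.2 hG)).symm c, by
    rw [← two_nsmul]; exact (nsmulCoprime (Nat.coprime_two_right.2 hG)).apply_symm_apply c⟩

theorem hasHamiltonianPath_sumGraph_sup_of_zmultiples_eq_top [Finite G] [DecidableEq G]
    (hG : Odd (Nat.card G)) {c c' : G} (hδ : zmultiples (c' - c) = ⊤) :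
    HasHamiltonianPath (sumGraph c ⊔ sumGraph c') := by
  obtain ⟨f, hf⟩ := exists_add_self_eq_of_odd_card hG c
  have horder : addOrderOf (c' - c) = Nat.card G := addOrderOf_eq_card_of_zmultiples_eq_top hδ
  set v : ℕ → G := fun m => f + zigzag m • (c' - c)
  have hinj : Set.InjOn v (Finset.range (Nat.card G)) := fun m hm m' hm' h =>
    eq_of_zigzag_modEq hG (by simpa using hm) (by simpa using hm')
      (horder ▸ zsmul_eq_zsmul_iff_modEq.1 (add_left_cancel h))
  have hadj : ∀ m, m + 1 < Nat.card G → (sumGraph c ⊔ sumGraph c').Adj (v m) (v (m + 1)) := by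
    intro m hm
    have hne : v m ≠ v (m + 1) := fun h => by
      have := hinj (by simpa using hm.trans' m.lt_succ_self) (by simpa using hm) h
      omega
    have hsum : v m + v (m + 1) = c + (zigzag m + zigzag (m + 1)) • (c' - c) := by
      simp only [v, add_zsmul, ← hf]; abel
    rw [zigzag_add_zigzag_succ] at hsum
    split_ifs at hsum
    · exact Or.inr ⟨hne, by rw [hsum, one_zsmul, add_sub_cancel]⟩
    · exact Or.inl ⟨hne, by rw [hsum, zero_zsmul, add_zero]⟩
  have : Nonempty G := ⟨0⟩
  exact hasHamiltonianPath_of_injOn v hinj hadj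

theorem map_mem_support_sumGraph_sup {Q : Type*} [AddCommGroup Q] (ψ : G →+ Q) {c c' : G}
    (hψ : ψ c = ψ c') {a b : G} (p : (sumGraph c ⊔ sumGraph c').Walk a b) :
    ∀ v ∈ p.support, ψ v = ψ a ∨ ψ v = ψ c - ψ a := by
  induction p with
  | nil => simp
  | @cons a w b hadj p ih =>
    have hsum : ψ a + ψ w = ψ c := by
      rcases hadj with ⟨-, h⟩ | ⟨-, h⟩ <;> simp [← map_add, h, hψ]
    intro v hv
    rcases List.mem_cons.1 (Walk.support_cons _ _ ▸ hv) with rfl | hv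
    · exact Or.inl rfl
    · rcases ih v hv with h | h
      · exact Or.inr (by rw [h, ← hsum, add_sub_cancel_left])
      · exact Or.inl (by rw [h, ← hsum, add_sub_cancel_right])

theorem zmultiples_eq_top_of_hasHamiltonianPath [DecidableEq G] (hG : Odd (Nat.card G))
    {c c' : G} (h : HasHamiltonianPath (sumGraph c ⊔ sumGraph c')) : zmultiples (c' - c) = ⊤ := by
  obtain ⟨a, b, p, hp⟩ := h
  set H := zmultiples (c' - c)
  set ψ := QuotientAddGroup.mk' H
  have hψ : ψ c = ψ c' := QuotientAddGroup.eq_iff_sub_mem.2 (by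
    rw [← neg_sub]; exact neg_mem (mem_zmultiples _))
  have : Finite G := Nat.finite_of_card_ne_zero hG.pos.ne'
  have hcover : Function.Surjective fun b : Bool => if b then ψ a else ψ c - ψ a := by
    intro y
    obtain ⟨v, rfl⟩ := QuotientAddGroup.mk'_surjective H y
    rcases map_mem_support_sumGraph_sup ψ hψ p v (hp.mem_support v) with h | h
    exacts [⟨true, h.symm⟩, ⟨false, h.symm⟩]
  have hle : H.index ≤ 2 := by
    show Nat.card (G ⧸ H) ≤ 2
    simpa using Nat.card_le_card_of_surjective _ hcover
  obtain ⟨k, hk⟩ := hG.of_dvd_nat H.index_dvd_card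
  exact index_eq_one.1 (by omega)

theorem hasHamiltonianPath_sumGraph_sup_iff [Finite G] [DecidableEq G] (hG : Odd (Nat.card G))
    {c c' : G} : HasHamiltonianPath (sumGraph c ⊔ sumGraph c') ↔ zmultiples (c' - c) = ⊤ :=
  ⟨zmultiples_eq_top_of_hasHamiltonianPath hG,
    hasHamiltonianPath_sumGraph_sup_of_zmultiples_eq_top hG⟩

end SumGraph

theorem zmultiples_eq_top_iff_isUnit {R : Type*} [CommRing R]
    (hR : Function.Surjective (Int.cast : ℤ → R)) {x : R} : zmultiples x = ⊤ ↔ IsUnit x := by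
  constructor
  · intro h
    obtain ⟨m, hm⟩ := mem_zmultiples_iff.1 (h ▸ mem_top (1 : R))
    exact IsUnit.of_mul_eq_one_right (m : R) (by rwa [← zsmul_eq_mul])
  · rintro ⟨u, rfl⟩
    refine eq_top_iff.2 fun y _ => ?_
    obtain ⟨m, hm⟩ := hR (y * ↑u⁻¹)
    exact ⟨m, show m • (u : R) = y by rw [zsmul_eq_mul, hm, Units.inv_mul_cancel_right]⟩

theorem intCast_surjective_zmod_prod {s t : ℕ} (hco : s.Coprime t) :
    Function.Surjective (Int.cast : ℤ → ZMod s × ZMod t) := by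
  intro y
  obtain ⟨m, hm⟩ := ZMod.intCast_surjective ((ZMod.chineseRemainder hco).symm y)
  exact ⟨m, by rw [← map_intCast (ZMod.chineseRemainder hco), hm, RingEquiv.apply_symm_apply]⟩

noncomputable def unitSubEquiv (R : Type*) [Ring R] :
    {q : R × R // IsUnit (q.2 - q.1)} ≃ R × Rˣ where
  toFun q := (q.1.1, q.2.unit)
  invFun x := ⟨(x.1, x.1 + x.2), by simp⟩
  left_inv q := by ext <;> simp
  right_inv x := by ext <;> simp

theorem card_zmod_prod_units (s t : ℕ) [NeZero s] [NeZero t] :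
    Nat.card (ZMod s × ZMod t)ˣ = s.totient * t.totient := by
  rw [Nat.card_congr MulEquiv.prodUnits.toEquiv, Nat.card_prod, Nat.card_eq_fintype_card,
    Nat.card_eq_fintype_card, ZMod.card_units_eq_totient, ZMod.card_units_eq_totient]

theorem stmt_13_general (s t : ℕ) (hs : 1 < s)
    (hsodd : Odd s) (htodd : Odd t) (hco : Nat.Coprime s t) :
    Nat.card {q : (ZMod s × ZMod t) × (ZMod s × ZMod t) //
        q.1 ≠ q.2 ∧ HasHamiltonianPath (D s t q.1.1 q.1.2 ⊔ D s t q.2.1 q.2.2)} =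
      (s * Nat.totient s) * (t * Nat.totient t) := by
  have : NeZero s := ⟨hsodd.pos.ne'⟩
  have : NeZero t := ⟨htodd.pos.ne'⟩
  have : Fact (1 < s) := ⟨hs⟩
  have hodd : Odd (Nat.card (ZMod s × ZMod t)) := by
    rw [Nat.card_prod, Nat.card_zmod, Nat.card_zmod]; exact hsodd.mul htodd
  have hpair : ∀ q : (ZMod s × ZMod t) × (ZMod s × ZMod t),
      (q.1 ≠ q.2 ∧ HasHamiltonianPath (D s t q.1.1 q.1.2 ⊔ D s t q.2.1 q.2.2)) ↔
        IsUnit (q.2 - q.1) := by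
    intro q
    rw [D_eq_sumGraph, D_eq_sumGraph, hasHamiltonianPath_sumGraph_sup_iff hodd,
      zmultiples_eq_top_iff_isUnit (intCast_surjective_zmod_prod hco)]
    exact and_iff_right_of_imp fun hu he => not_isUnit_zero (by rwa [he, sub_self] at hu)
  rw [Nat.card_congr ((Equiv.subtypeEquivRight hpair).trans (unitSubEquiv _)), Nat.card_prod,
    Nat.card_prod, Nat.card_zmod, Nat.card_zmod, card_zmod_prod_units]
  ring

theorem stmt_13 (s t : ℕ) (hs : 1 < s) (ht : 1 < t)
    (hsodd : Odd s) (htodd : Odd t) (hco : Nat.Coprime s t) :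
    Nat.card {q : (ZMod s × ZMod t) × (ZMod s × ZMod t) //
        q.1 ≠ q.2 ∧ HasHamiltonianPath (D s t q.1.1 q.1.2 ⊔ D s t q.2.1 q.2.2)} =
      (s * Nat.totient s) * (t * Nat.totient t) :=
  stmt_13_general s t hs hsodd htodd hco
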